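/- arXiv:2403.01337 — 3 statements merged into one kernel-verified Lean document; each statement's English description precedes it below -/
import Mathlib

section
/- Let k be a natural number and let Γ be a row-finite, source-free k-graph. If Γ is simply connected, then there is a map f from the objects of Γ to ℤ^k such that for every morphism λ : X ⟶ Y of Γ, the degree d(λ), viewed in ℤ^k, equals f(X) − f(Y) (i.e. the degree of λ is the difference of the values of f at the source and range of λ). -/
/-!
The degree map is a functor from `Γ` to the group `ℤᵏ`, so it factors through the fundamental
groupoid `Π(Γ)`. When `Γ` is simply connected, every hom-set of `Π(Γ)` has at most one element.
Choosing a base point in each component of `Π(Γ)` and sending `X` to the image of the unique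
morphism from `X` to its base point gives the potential `f`: for `λ : X ⟶ Y`, the morphism
from `X` to the base point factors through `λ`.
-/

open CategoryTheory

/-- A `k`-graph structure on a small category `Γ`. -/
structure KGraph (k : ℕ) (Λ : Type) [SmallCategory Λ] where
  d : ∀ {X Y : Λ}, (X ⟶ Y) → (Fin k → ℕ)
  d_id : ∀ X : Λ, d (𝟙 X) = 0
  d_comp : ∀ {X Y Z : Λ} (f : X ⟶ Y) (g : Y ⟶ Z), d (f ≫ g) = d f + d g
  factorisation : ∀ {X Z : Λ} (f : X ⟶ Z) (m n : Fin k → ℕ), d f = m + n →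
    ∃! t : Σ Y : Λ, (X ⟶ Y) × (Y ⟶ Z),
      d t.2.1 = m ∧ d t.2.2 = n ∧ t.2.1 ≫ t.2.2 = f

/-- `Γ` is row-finite and source-free: for every vertex `v` and degree `n`, the set of
morphisms of degree `n` with range `v` is finite and nonempty.  (Here a morphism
`f : u ⟶ v` has source `u` and range `v`.) -/
def RowFiniteSourceFree {k : ℕ} {Γ : Type} [SmallCategory Γ] (S : KGraph k Γ) : Prop :=
  ∀ (v : Γ) (n : Fin k → ℕ),
    {t : Σ u : Γ, u ⟶ v | S.d t.2 = n}.Finite ∧ {t : Σ u : Γ, u ⟶ v | S.d t.2 = n}.Nonempty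

/-- `Γ` is simply connected: the fundamental group at each vertex, i.e. the
endomorphism monoid of each object of the localization at all morphisms, is trivial. -/
def SimplyConnected (Γ : Type) [SmallCategory Γ] : Prop :=
  ∀ v : Γ, Subsingleton (End ((⊤ : MorphismProperty Γ).Q.obj v))

namespace CategoryTheory

lemma subsingleton_hom_of_subsingleton_end {D : Type*} [Category D] [IsGroupoid D]
    (hD : ∀ X : D, Subsingleton (End X)) (X Y : D) : Subsingleton (X ⟶ Y) where
  allEq f g := by
    have : f ≫ inv g = 𝟙 X := Subsingleton.elim (α := End X) _ _
    simpa using this =≫ g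

lemma map_eq_mul_of_subsingleton_hom {D : Type*} [Category D]
    (hD : ∀ X Y : D, Subsingleton (X ⟶ Y)) {M : Type*} [Monoid M] (F : D ⥤ SingleObj M)
    {X Y Z Z' : D} (f : X ⟶ Y) (a : X ⟶ Z) (b : Y ⟶ Z') (hZ : Z = Z') :
    (F.map a : M) = F.map b * F.map f := by
  subst hZ
  rw [← SingleObj.comp_as_mul, ← F.map_comp, Subsingleton.elim a (f ≫ b)]

lemma exists_coboundary_of_subsingleton_hom {D : Type*} [Category D] [IsGroupoid D]
    (hD : ∀ X Y : D, Subsingleton (X ⟶ Y)) {M : Type*} [Group M] (F : D ⥤ SingleObj M) :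
    ∃ φ : D → M, ∀ {X Y : D} (f : X ⟶ Y), (F.map f : M) = (φ Y)⁻¹ * φ X := by
  let rep : D → D := fun X => (_root_.Quotient.mk (isIsomorphicSetoid D) X).out
  have toRep (X : D) : X ⟶ rep X :=
    (_root_.Quotient.mk_out (s := isIsomorphicSetoid D) X).some.inv
  refine ⟨fun X => F.map (toRep X), fun {X Y} f => ?_⟩
  have hrep : rep X = rep Y := congrArg _root_.Quotient.out (_root_.Quotient.sound ⟨asIso f⟩)
  dsimp only
  rw [map_eq_mul_of_subsingleton_hom hD F f (toRep X) (toRep Y) hrep, inv_mul_cancel_left]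

end CategoryTheory

lemma exists_coboundary_of_simplyConnected {C : Type} [SmallCategory C] (hC : SimplyConnected C)
    {M : Type*} [Group M] (F : C ⥤ SingleObj M) :
    ∃ φ : C → M, ∀ {X Y : C} (f : X ⟶ Y), (F.map f : M) = (φ Y)⁻¹ * φ X := by
  have hF : (⊤ : MorphismProperty C).IsInvertedBy F := fun _ _ _ _ => inferInstance
  let G := Localization.Construction.lift F hF
  have hG {X Y : C} (f : X ⟶ Y) : G.map ((⊤ : MorphismProperty C).Q.map f) = F.map f := by
    change ((⊤ : MorphismProperty C).Q ⋙ G).map f = _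
    rw [Localization.Construction.fac F hF]
  have hEnd (X : (⊤ : MorphismProperty C).Localization) : Subsingleton (End X) := by
    obtain ⟨v, rfl⟩ := (Localization.Construction.objEquiv ⊤).surjective X
    exact hC v
  obtain ⟨φ, hφ⟩ := exists_coboundary_of_subsingleton_hom
    (subsingleton_hom_of_subsingleton_end hEnd) G
  exact ⟨fun X => φ ((⊤ : MorphismProperty C).Q.obj X), fun f => by rw [← hG, hφ]⟩

def KGraph.degreeFunctor {k : ℕ} {Γ : Type} [SmallCategory Γ] (S : KGraph k Γ) :
    Γ ⥤ SingleObj (Multiplicative (Fin k → ℤ)) where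
  obj _ := SingleObj.star _
  map f := Multiplicative.ofAdd fun i => (S.d f i : ℤ)
  map_id X := by
    rw [S.d_id]
    rfl
  map_comp f g := by
    rw [SingleObj.comp_as_mul, ← ofAdd_add, S.d_comp]
    congr 1
    ext i
    push_cast [Pi.add_apply]
    exact add_comm _ _

theorem degree_is_coboundary_of_simplyConnected_general (k : ℕ) (Γ : Type) [SmallCategory Γ]
    (S : KGraph k Γ) (hsimp : SimplyConnected Γ) :
    ∃ f : Γ → (Fin k → ℤ),
      ∀ (X Y : Γ) (lam : X ⟶ Y), (fun i => (S.d lam i : ℤ)) = f X - f Y := by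
  obtain ⟨φ, hφ⟩ := exists_coboundary_of_simplyConnected hsimp S.degreeFunctor
  refine ⟨fun X => (φ X).toAdd, fun X Y lam => ?_⟩
  have h := congrArg Multiplicative.toAdd (hφ lam)
  rwa [toAdd_mul, toAdd_inv, ← sub_eq_neg_add] at h

/-- if a row-finite source-free `k`-graph is simply connected, then its
degree map is a coboundary: there is `f : Γ⁰ → ℤᵏ` with `d λ = f (s λ) - f (r λ)`. -/
theorem degree_is_coboundary_of_simplyConnected (k : ℕ) (Γ : Type) [SmallCategory Γ]
    (S : KGraph k Γ) (hrf : RowFiniteSourceFree S) (hsimp : SimplyConnected Γ) :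
    ∃ f : Γ → (Fin k → ℤ),
      ∀ (X Y : Γ) (lam : X ⟶ Y), (fun i => (S.d lam i : ℤ)) = f X - f Y :=
  degree_is_coboundary_of_simplyConnected_general k Γ S hsimp
end

section
/- Let k be a natural number and let Γ be a row-finite, source-free k-graph. The orbit space Γ^∞/≃ (the quotient of the infinite path space of Γ by shift equivalence, with the quotient topology) is Hausdorff if and only if for every pair of infinite paths x, y ∈ Γ^∞ with x not shift equivalent to y, there exists N ∈ ℕ^k such that no object u of Γ admits both a morphism u ⟶ x(N) and a morphism u ⟶ y(N) (i.e. the vertices x(N) and y(N) have no common upper bound: s(μ) ≠ s(ν) for all μ with range x(N) and ν with range y(N)). -/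
open CategoryTheory

/-- An infinite path in a `k`-graph `Γ`: a (degree-preserving) functor from the opposite
of the poset category `(Fin k → ℕ, ≤)` to `Γ`, given concretely by its action `vertex`
on objects and `edge` on morphisms. -/
structure InfPath {k : ℕ} {Γ : Type} [SmallCategory Γ] (S : KGraph k Γ) where
  vertex : (Fin k → ℕ) → Γ
  edge : ∀ m n : Fin k → ℕ, m ≤ n → (vertex n ⟶ vertex m)
  edge_refl : ∀ n, edge n n le_rfl = 𝟙 (vertex n)
  edge_comp : ∀ (m n p : Fin k → ℕ) (h₁ : m ≤ n) (h₂ : n ≤ p),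
    edge m p (h₁.trans h₂) = edge n p h₂ ≫ edge m n h₁
  deg : ∀ (m n : Fin k → ℕ) (h : m ≤ n), S.d (edge m n h) = n - m

namespace InfPath

variable {k : ℕ} {Γ : Type} [SmallCategory Γ] {S : KGraph k Γ}

/-- The shift `σ^p x` of an infinite path `x`. -/
def shift (p : Fin k → ℕ) (x : InfPath S) : InfPath S where
  vertex n := x.vertex (n + p)
  edge m n h := x.edge (m + p) (n + p) (add_le_add h le_rfl)
  edge_refl n := x.edge_refl (n + p)
  edge_comp m n q h₁ h₂ := x.edge_comp (m + p) (n + p) (q + p) _ _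
  deg m n h := by
    rw [x.deg]
    funext i
    simp [Nat.add_sub_add_right]

/-- Shift equivalence of infinite paths. -/
def ShiftEquiv (x y : InfPath S) : Prop := ∃ p q, shift p x = shift q y

/-- The cylinder set of a morphism `lam : X ⟶ Y`: infinite paths whose initial segment
of degree `d lam` is `lam`. -/
def cyl {X Y : Γ} (lam : X ⟶ Y) : Set (InfPath S) :=
  {x | ∃ (h₁ : x.vertex (S.d lam) = X) (h₀ : x.vertex 0 = Y),
    x.edge 0 (S.d lam) zero_le = eqToHom h₁ ≫ lam ≫ eqToHom h₀.symm}

/-- The topology on the infinite path space, generated by the cylinder sets. -/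
def pathTopology (S : KGraph k Γ) : TopologicalSpace (InfPath S) :=
  TopologicalSpace.generateFrom {U | ∃ (X Y : Γ) (lam : X ⟶ Y), U = cyl lam}

/-- The quotient topology on the orbit space `Γ^∞/≃` of the infinite path space by
shift equivalence. -/
def orbitTopology (S : KGraph k Γ) :
    TopologicalSpace (Quot (ShiftEquiv (S := S))) :=
  (pathTopology S).coinduced (Quot.mk _)

end InfPath

open InfPath

/-!
If `x(N)` and `y(N)` admit no common `u ⟶ x(N)`, `u ⟶ y(N)`, the paths passing through a vertex
mapping to `x(N)`, resp. `y(N)`, form disjoint shift-invariant open sets. Conversely, given cylinder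
neighbourhoods `Z(λ) ∋ x`, `Z(μ) ∋ y` and `N ≥ d(λ), d(μ)`, a common `f : u ⟶ x(N)`,
`g : u ⟶ y(N)` lets one prepend `f x(0, N)` and `g y(0, N)` to a single infinite path starting at
`u`; the two results lie in `Z(λ)` and `Z(μ)` and are shift equivalent, so the orbits of `x` and
`y` cannot be separated.

All constructions rest on unique factorisation in the form: if `a ≫ h = a' ≫ h'` and
`d h = d h'`, then `a = a'` and `h = h'` as arrows. Hence every morphism is a monomorphism, and an
infinite path can be built from any coherent family of morphisms `H n` of degree `n` into a fixed
vertex.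
-/

namespace KGraph

variable {k : ℕ} {Γ : Type} [SmallCategory Γ] (S : KGraph k Γ)

theorem arrow_mk_eq_of_arrow_mk_comp_eq {X Y Z X' Y' Z' : Γ} {a : X ⟶ Y} {h : Y ⟶ Z}
    {a' : X' ⟶ Y'} {h' : Y' ⟶ Z'} (hc : Arrow.mk (a ≫ h) = Arrow.mk (a' ≫ h'))
    (hd : S.d h = S.d h') : Arrow.mk a = Arrow.mk a' ∧ Arrow.mk h = Arrow.mk h' := by
  obtain ⟨rfl, rfl, hc⟩ := (Arrow.mk_eq_mk_iff _ _).1 hc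
  simp only [eqToHom_refl, Category.id_comp, Category.comp_id] at hc
  have hda : S.d a = S.d a' := by
    have := congrArg S.d hc
    rwa [S.d_comp, S.d_comp, hd, add_left_inj] at this
  obtain ⟨t, -, ht⟩ := S.factorisation (a ≫ h) (S.d a) (S.d h) (S.d_comp a h)
  have h₁ := ht ⟨Y, a, h⟩ ⟨rfl, rfl, rfl⟩
  have h₂ := ht ⟨Y', a', h'⟩ ⟨hda.symm, hd.symm, hc.symm⟩
  cases h₁.trans h₂.symm
  exact ⟨rfl, rfl⟩

theorem d_eq_of_arrow_mk_eq {X Y X' Y' : Γ} {f : X ⟶ Y} {f' : X' ⟶ Y'}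
    (h : Arrow.mk f = Arrow.mk f') : S.d f = S.d f' := by
  obtain ⟨rfl, rfl, rfl⟩ := (Arrow.mk_eq_mk_iff _ _).1 h
  simp

theorem arrow_mk_eq_id_of_d_eq_zero {X Y : Γ} {f : X ⟶ Y} (hf : S.d f = 0) :
    Arrow.mk f = Arrow.mk (𝟙 Y) :=
  (S.arrow_mk_eq_of_arrow_mk_comp_eq (a := 𝟙 X) (h := f) (a' := f) (h' := 𝟙 Y) (by simp)
    (by rw [S.d_id, hf])).2

theorem mono (S : KGraph k Γ) {X Y : Γ} (f : X ⟶ Y) : Mono f :=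
  ⟨fun _ _ hc => (Arrow.mk_inj _ _).1
    (S.arrow_mk_eq_of_arrow_mk_comp_eq (congrArg Arrow.mk hc) rfl).1⟩

theorem exists_comp_eq_of_comp_eq_comp {X Y Y' Z : Γ} {a : X ⟶ Y} {h : Y ⟶ Z}
    {a' : X ⟶ Y'} {h' : Y' ⟶ Z} (hc : a ≫ h = a' ≫ h') (hd : S.d h' ≤ S.d h) :
    ∃ g : Y ⟶ Y', g ≫ h' = h := by
  obtain ⟨⟨W, p, q⟩, ⟨-, hq, hpq⟩, -⟩ :=
    S.factorisation h (S.d h - S.d h') (S.d h') (tsub_add_cancel_of_le hd).symm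
  have hc' : Arrow.mk ((a ≫ p) ≫ q) = Arrow.mk (a' ≫ h') := by
    rw [Category.assoc, hpq, hc]
  obtain ⟨e, _, hq'⟩ := (Arrow.mk_eq_mk_iff _ _).1 (S.arrow_mk_eq_of_arrow_mk_comp_eq hc' hq).2
  refine ⟨p ≫ eqToHom e, ?_⟩
  rw [← hpq, hq']
  simp

end KGraph

namespace InfPath

open Topology

variable {k : ℕ} {Γ : Type} [SmallCategory Γ] {S : KGraph k Γ}

theorem arrow_mk_edge_congr (x : InfPath S) {m n m' n' : Fin k → ℕ} (hm : m = m') (hn : n = n')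
    (h : m ≤ n) (h' : m' ≤ n') : Arrow.mk (x.edge m n h) = Arrow.mk (x.edge m' n' h') := by
  subst hm hn
  rfl

theorem ext_of_arrow_mk_edge {x y : InfPath S}
    (h : ∀ m n (hmn : m ≤ n), Arrow.mk (x.edge m n hmn) = Arrow.mk (y.edge m n hmn)) : x = y := by
  have hv : x.vertex = y.vertex := funext fun n => congrArg Arrow.left (h n n le_rfl)
  cases x
  cases y
  subst hv
  congr
  funext m n hmn
  exact (Arrow.mk_inj _ _).1 (h m n hmn)

theorem shift_shift (p q : Fin k → ℕ) (x : InfPath S) :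
    shift p (shift q x) = shift (p + q) x :=
  ext_of_arrow_mk_edge fun m n _ =>
    x.arrow_mk_edge_congr (add_assoc m p q) (add_assoc n p q) _ _

theorem shiftEquiv_equivalence : Equivalence (ShiftEquiv (S := S)) where
  refl x := ⟨0, 0, rfl⟩
  symm := fun ⟨p, q, h⟩ => ⟨q, p, h.symm⟩
  trans := fun {x y z} ⟨p, q, hxy⟩ ⟨p', q', hyz⟩ => ⟨p' + p, q + q', by
    rw [← shift_shift, hxy, shift_shift, add_comm, ← shift_shift, hyz, shift_shift]⟩

theorem mk_eq_mk_iff {x y : InfPath S} :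
    Quot.mk ShiftEquiv x = Quot.mk ShiftEquiv y ↔ ShiftEquiv x y :=
  Quot.eq.trans shiftEquiv_equivalence.eqvGen_iff

/-- The infinite path whose segment `(m, n)` is the unique `g` with `g ≫ H m = H n`. -/
noncomputable def ofInitialSegments {b : Γ} (V : (Fin k → ℕ) → Γ) (H : ∀ n, V n ⟶ b)
    (hH : ∀ n, S.d (H n) = n) (hcoh : ∀ m n, m ≤ n → ∃ g : V n ⟶ V m, g ≫ H m = H n) :
    InfPath S where
  vertex := V
  edge m n h := (hcoh m n h).choose
  edge_refl n := (S.mono (H n)).right_cancellation _ _ <| by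
    rw [(hcoh n n le_rfl).choose_spec, Category.id_comp]
  edge_comp m n p h₁ h₂ := (S.mono (H m)).right_cancellation _ _ <| by
    rw [Category.assoc, (hcoh m n h₁).choose_spec, (hcoh n p h₂).choose_spec,
      (hcoh m p (h₁.trans h₂)).choose_spec]
  deg m n h := by
    have := congrArg S.d (hcoh m n h).choose_spec
    rw [S.d_comp, hH, hH] at this
    exact eq_tsub_of_add_eq this

theorem ofInitialSegments_edge_comp {b : Γ} (V : (Fin k → ℕ) → Γ) (H : ∀ n, V n ⟶ b)
    (hH : ∀ n, S.d (H n) = n) (hcoh : ∀ m n, m ≤ n → ∃ g : V n ⟶ V m, g ≫ H m = H n)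
    (m n : Fin k → ℕ) (h : m ≤ n) : (ofInitialSegments V H hH hcoh).edge m n h ≫ H m = H n :=
  (hcoh m n h).choose_spec

/-- A directed family of morphisms into `b` with cofinal degrees determines an infinite path,
whose segments `H n` into `b` are initial segments of the members of the family. -/
theorem exists_path_of_directed {ι : Type} [SemilatticeSup ι] {b : Γ} {V : ι → Γ}
    (F : ∀ i, V i ⟶ b)
    (hF : ∀ i j, i ≤ j → ∃ r : V j ⟶ V i, r ≫ F i = F j) (hcof : ∀ n, ∃ i, n ≤ S.d (F i)) :
    ∃ (x : InfPath S) (H : ∀ n, x.vertex n ⟶ b), (∀ n, S.d (H n) = n) ∧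
      (∀ m n h, x.edge m n h ≫ H m = H n) ∧ ∀ i n, n ≤ S.d (F i) → ∃ a, a ≫ H n = F i := by
  choose i hi using hcof
  choose t ht _ using fun n =>
    S.factorisation (F (i n)) (S.d (F (i n)) - n) n (tsub_add_cancel_of_le (hi n)).symm
  have htail : ∀ j n, n ≤ S.d (F j) → ∃ a, a ≫ (t n).2.2 = F j := by
    intro j n hn
    obtain ⟨r, hr⟩ := hF j (j ⊔ i n) le_sup_left
    obtain ⟨r', hr'⟩ := hF (i n) (j ⊔ i n) le_sup_right
    refine S.exists_comp_eq_of_comp_eq_comp (a := r) (a' := r' ≫ (t n).2.1) ?_ ?_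
    · rw [hr, ← hr', Category.assoc, (ht n).2.2]
    · rw [(ht n).2.1]
      exact hn
  have hcoh : ∀ m n, m ≤ n → ∃ g : (t n).1 ⟶ (t m).1, g ≫ (t m).2.2 = (t n).2.2 := by
    intro m n hmn
    obtain ⟨a, ha⟩ := htail (i n) m (hmn.trans (hi n))
    refine S.exists_comp_eq_of_comp_eq_comp ((ht n).2.2.trans ha.symm) ?_
    rw [(ht n).2.1, (ht m).2.1]
    exact hmn
  exact ⟨ofInitialSegments _ _ (fun n => (ht n).2.1) hcoh, fun n => (t n).2.2, fun n => (ht n).2.1,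
    ofInitialSegments_edge_comp _ _ _ hcoh, htail⟩

theorem exists_vertex_zero_eq (hsf : ∀ v : Γ, {t : Σ u : Γ, u ⟶ v | S.d t.2 = 1}.Nonempty)
    (u : Γ) : ∃ z : InfPath S, z.vertex 0 = u := by
  choose e he using hsf
  let T : ℕ → Σ w : Γ, w ⟶ u :=
    fun j => Nat.rec ⟨u, 𝟙 u⟩ (fun _ s => ⟨(e s.1).1, (e s.1).2 ≫ s.2⟩) j
  have hT : ∀ j, S.d (T j).2 = j • 1 := by
    intro j
    induction j with
    | zero => simp [T, S.d_id]
    | succ j ih =>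
      change S.d ((e (T j).1).2 ≫ (T j).2) = _
      rw [S.d_comp, he, ih, succ_nsmul']
  have hF : ∀ i j, i ≤ j → ∃ r : (T j).1 ⟶ (T i).1, r ≫ (T i).2 = (T j).2 := by
    intro i j hij
    induction j, hij using Nat.le_induction with
    | base => exact ⟨𝟙 _, Category.id_comp _⟩
    | succ j _ ih =>
      obtain ⟨r, hr⟩ := ih
      exact ⟨(e (T j).1).2 ≫ r, by rw [Category.assoc, hr]⟩
  obtain ⟨z, H, hH, -⟩ := exists_path_of_directed (S := S) (fun j => (T j).2) hF fun n =>
    ⟨Finset.univ.sup n, fun i => by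
      rw [hT]
      simpa using Finset.le_sup (f := n) (Finset.mem_univ i)⟩
  exact ⟨z, congrArg Arrow.left (S.arrow_mk_eq_id_of_d_eq_zero (hH 0))⟩

theorem mem_cyl_iff {X Y : Γ} {lam : X ⟶ Y} {x : InfPath S} :
    x ∈ cyl lam ↔ Arrow.mk (x.edge 0 (S.d lam) zero_le) = Arrow.mk lam :=
  (Arrow.mk_eq_mk_iff _ _).symm

theorem cyl_congr {X Y X' Y' : Γ} {lam : X ⟶ Y} {mu : X' ⟶ Y'} (h : Arrow.mk lam = Arrow.mk mu) :
    cyl (S := S) lam = cyl mu := by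
  ext x
  rw [mem_cyl_iff, mem_cyl_iff, h, S.d_eq_of_arrow_mk_eq h]

theorem mem_cyl_of_mem_cyl_comp {W X Y : Γ} {a : W ⟶ X} {lam : X ⟶ Y} {x : InfPath S}
    (hx : x ∈ cyl (a ≫ lam)) : x ∈ cyl lam := by
  have hle : S.d lam ≤ S.d (a ≫ lam) := by
    rw [S.d_comp]
    exact le_add_self
  rw [mem_cyl_iff, x.edge_comp 0 _ _ zero_le hle] at hx
  rw [mem_cyl_iff]
  exact (S.arrow_mk_eq_of_arrow_mk_comp_eq hx (by rw [x.deg, tsub_zero])).2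

theorem mem_cyl_edge_self (x : InfPath S) (r : Fin k → ℕ) : x ∈ cyl (x.edge 0 r zero_le) :=
  mem_cyl_iff.2 (x.arrow_mk_edge_congr rfl (by rw [x.deg, tsub_zero]) _ _)

theorem cyl_edge_subset {X Y : Γ} {lam : X ⟶ Y} {x : InfPath S} (hx : x ∈ cyl lam)
    {r : Fin k → ℕ} (hr : S.d lam ≤ r) : cyl (x.edge 0 r zero_le) ⊆ cyl (S := S) lam := by
  rw [← cyl_congr (mem_cyl_iff.1 hx),
    cyl_congr (congrArg Arrow.mk (x.edge_comp 0 _ r zero_le hr))]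
  exact fun _ => mem_cyl_of_mem_cyl_comp

/-- `w` is the path `lam z` obtained by prepending `lam` to `z`. -/
theorem exists_mem_cyl_shift_eq {b : Γ} (z : InfPath S) (lam : z.vertex 0 ⟶ b) :
    ∃ w ∈ cyl lam, shift (S.d lam) w = z := by
  have hdeg : ∀ n, S.d (z.edge 0 n zero_le ≫ lam) = n + S.d lam := fun n => by
    rw [S.d_comp, z.deg, tsub_zero]
  obtain ⟨w, H, hH, hwH, htail⟩ := exists_path_of_directed (fun n => z.edge 0 n zero_le ≫ lam)
    (fun m n h => ⟨z.edge m n h, by rw [← Category.assoc, ← z.edge_comp]⟩)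
    (fun n => ⟨n, by rw [hdeg]; exact le_self_add⟩)
  have hH' : ∀ n, Arrow.mk (H (n + S.d lam)) = Arrow.mk (z.edge 0 n zero_le ≫ lam) := by
    intro n
    obtain ⟨a, ha⟩ := htail n (n + S.d lam) (by rw [hdeg])
    refine (S.arrow_mk_eq_of_arrow_mk_comp_eq (a' := 𝟙 _) (by rw [ha, Category.id_comp]) ?_).2
    rw [hH, hdeg]
  refine ⟨w, mem_cyl_iff.2 ?_, ext_of_arrow_mk_edge fun m n h => ?_⟩
  · have hlam := hH' 0
    rw [zero_add, z.edge_refl, Category.id_comp, ← hwH 0 _ zero_le] at hlam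
    refine (S.arrow_mk_eq_of_arrow_mk_comp_eq (h' := 𝟙 b) (by rw [hlam, Category.comp_id]) ?_).1
    rw [hH, S.d_id]
  · refine (S.arrow_mk_eq_of_arrow_mk_comp_eq
      (a := w.edge (m + S.d lam) (n + S.d lam) (add_le_add h le_rfl)) (h := H (m + S.d lam))
      (h' := z.edge 0 m zero_le ≫ lam) ?_ ?_).1
    · rw [hwH, hH', ← Category.assoc, ← z.edge_comp]
    · rw [hH, hdeg]

theorem exists_mem_cyl_shiftEquiv
    (hsf : ∀ v : Γ, {t : Σ u : Γ, u ⟶ v | S.d t.2 = 1}.Nonempty) {u X Y : Γ}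
    (lam : u ⟶ X) (mu : u ⟶ Y) : ∃ w₁ ∈ cyl (S := S) lam, ∃ w₂ ∈ cyl mu, ShiftEquiv w₁ w₂ := by
  obtain ⟨z, rfl⟩ := exists_vertex_zero_eq hsf u
  obtain ⟨w₁, hw₁, hz₁⟩ := exists_mem_cyl_shift_eq z lam
  obtain ⟨w₂, hw₂, hz₂⟩ := exists_mem_cyl_shift_eq z mu
  exact ⟨w₁, hw₁, w₂, hw₂, _, _, hz₁.trans hz₂.symm⟩

theorem isOpen_cyl {X Y : Γ} (lam : X ⟶ Y) : IsOpen[pathTopology S] (cyl lam) :=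
  TopologicalSpace.GenerateOpen.basic _ ⟨X, Y, lam, rfl⟩

theorem isTopologicalBasis_cyl :
    @TopologicalSpace.IsTopologicalBasis _ (pathTopology S)
      {U : Set (InfPath S) | ∃ (X Y : Γ) (lam : X ⟶ Y), U = cyl lam} := by
  refine @TopologicalSpace.IsTopologicalBasis.mk _ (pathTopology S) _ ?_ ?_ rfl
  · rintro _ ⟨X₁, Y₁, lam₁, rfl⟩ _ ⟨X₂, Y₂, lam₂, rfl⟩ x ⟨hx₁, hx₂⟩
    exact ⟨_, ⟨_, _, _, rfl⟩, mem_cyl_edge_self x (S.d lam₁ ⊔ S.d lam₂),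
      Set.subset_inter (cyl_edge_subset hx₁ le_sup_left) (cyl_edge_subset hx₂ le_sup_right)⟩
  · exact Set.eq_univ_of_forall fun x => ⟨_, ⟨_, _, _, rfl⟩, mem_cyl_edge_self x 0⟩

def hits (v : Γ) : Set (InfPath S) := {z | ∃ p, Nonempty (z.vertex p ⟶ v)}

theorem mem_hits_shift_iff {v : Γ} {p : Fin k → ℕ} {z : InfPath S} :
    shift p z ∈ hits v ↔ z ∈ hits v :=
  ⟨fun ⟨r, hr⟩ => ⟨r + p, hr⟩,
    fun ⟨r, ⟨f⟩⟩ => ⟨r, ⟨z.edge r (r + p) le_self_add ≫ f⟩⟩⟩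

theorem mem_hits_congr {v : Γ} {x y : InfPath S} (h : ShiftEquiv x y) :
    x ∈ hits v ↔ y ∈ hits v := by
  obtain ⟨p, q, h⟩ := h
  rw [← mem_hits_shift_iff (p := p), h, mem_hits_shift_iff]

theorem isOpen_hits (v : Γ) : IsOpen[pathTopology S] (hits v) := by
  refine (@isOpen_iff_forall_mem_open _ (pathTopology S) _).2 fun z ⟨p, hp⟩ =>
    ⟨_, fun w hw => ⟨S.d (z.edge 0 p zero_le), ?_⟩, isOpen_cyl _, mem_cyl_edge_self z p⟩
  obtain ⟨h₁, -⟩ := hw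
  rwa [h₁]

/-- The image of `hits v` in the orbit space. -/
def orbitHits (v : Γ) : Set (Quot (ShiftEquiv (S := S))) :=
  {q | Quot.lift (· ∈ hits v) (fun _ _ h => propext (mem_hits_congr h)) q}

theorem isOpen_orbitHits (v : Γ) : IsOpen[orbitTopology S] (orbitHits v) :=
  isOpen_hits v

theorem disjoint_orbitHits {v v' : Γ} (h : ∀ u : Γ, ¬ (Nonempty (u ⟶ v) ∧ Nonempty (u ⟶ v'))) :
    Disjoint (orbitHits (S := S) v) (orbitHits v') := by
  refine Set.disjoint_left.2 fun q => ?_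
  induction q using Quot.ind with | mk z => ?_
  rintro ⟨p, ⟨f⟩⟩ ⟨p', ⟨f'⟩⟩
  exact h _ ⟨⟨z.edge p (p ⊔ p') le_sup_left ≫ f⟩, ⟨z.edge p' (p ⊔ p') le_sup_right ≫ f'⟩⟩

end InfPath

open InfPath

/-- for a row-finite source-free `k`-graph, the orbit space `Γ^∞/≃` is
Hausdorff if and only if any two non-shift-equivalent infinite paths `x, y` eventually
pass through vertices `x N`, `y N` with no common upper bound. -/
theorem orbit_space_hausdorff_iff (k : ℕ) (Γ : Type) [SmallCategory Γ]
    (S : KGraph k Γ) (hrf : RowFiniteSourceFree S) :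
    @T2Space _ (orbitTopology S) ↔
      ∀ x y : InfPath S, ¬ ShiftEquiv x y →
        ∃ N : Fin k → ℕ, ∀ u : Γ,
          ¬ (Nonempty (u ⟶ x.vertex N) ∧ Nonempty (u ⟶ y.vertex N)) := by
  constructor
  · intro hT2 x y hxy
    let _ : TopologicalSpace (InfPath S) := pathTopology S
    by_contra! hcon
    obtain ⟨U, V, hU, hV, hxU, hyV, hUV⟩ :=
      @t2_separation _ (orbitTopology S) hT2 _ _ (mt mk_eq_mk_iff.1 hxy)
    obtain ⟨_, ⟨X₁, Y₁, lam₁, rfl⟩, hx, hU'⟩ :=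
      isTopologicalBasis_cyl.exists_subset_of_mem_open hxU hU
    obtain ⟨_, ⟨X₂, Y₂, lam₂, rfl⟩, hy, hV'⟩ :=
      isTopologicalBasis_cyl.exists_subset_of_mem_open hyV hV
    obtain ⟨u, ⟨f⟩, ⟨g⟩⟩ := hcon (S.d lam₁ ⊔ S.d lam₂)
    obtain ⟨w₁, hw₁, w₂, hw₂, hw⟩ := exists_mem_cyl_shiftEquiv (fun v => (hrf v 1).2)
      (f ≫ x.edge 0 _ zero_le) (g ≫ y.edge 0 _ zero_le)
    exact hUV.ne_of_mem (hU' (cyl_edge_subset hx le_sup_left (mem_cyl_of_mem_cyl_comp hw₁)))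
      (hV' (cyl_edge_subset hy le_sup_right (mem_cyl_of_mem_cyl_comp hw₂))) (Quot.sound hw)
  · intro hsep
    refine @T2Space.mk _ (orbitTopology S) fun a b hab => ?_
    obtain ⟨x, rfl⟩ := Quot.exists_rep a
    obtain ⟨y, rfl⟩ := Quot.exists_rep b
    obtain ⟨N, hN⟩ := hsep x y fun h => hab (Quot.sound h)
    exact ⟨_, _, isOpen_orbitHits _, isOpen_orbitHits _, ⟨N, ⟨𝟙 _⟩⟩, ⟨N, ⟨𝟙 _⟩⟩,
      disjoint_orbitHits hN⟩
end

section
/- Let k be a natural number and let Γ be a singly connected, row-finite, source-free k-graph, with the partial order ≤ on objects given by u ≤ w if and only if there is a morphism w ⟶ u (i.e. uΓw ≠ ∅). Then a subset F of the objects of Γ is an ultrafilter for (Γ⁰, ≤) if and only if there is an infinite path x ∈ Γ^∞ such that F = {y(0) : y ∈ Γ^∞, y shift equivalent to x}. -/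
open CategoryTheory

open InfPath


open InfPath

/-- The order on vertices: `u ≤ w` iff there is a morphism `w ⟶ u` (i.e. `uΓw ≠ ∅`). -/
def vle {Γ : Type} [SmallCategory Γ] (u w : Γ) : Prop := Nonempty (w ⟶ u)

/-- A filter for `(Γ⁰, ≤)`: a nonempty, upward-directed, downward-closed set of
vertices. -/
def IsVertexFilter {Γ : Type} [SmallCategory Γ] (F : Set Γ) : Prop :=
  F.Nonempty ∧
  (∀ u ∈ F, ∀ v ∈ F, ∃ w ∈ F, vle u w ∧ vle v w) ∧
  (∀ v ∈ F, ∀ u, vle u v → u ∈ F)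

/-- An ultrafilter for `(Γ⁰, ≤)`: a filter maximal under inclusion among filters. -/
def IsVertexUltrafilter {Γ : Type} [SmallCategory Γ] (F : Set Γ) : Prop :=
  IsVertexFilter F ∧ ∀ F' : Set Γ, IsVertexFilter F' → F ⊆ F' → F' = F

/-! An infinite path `x` determines the filter `x.reachSet` of vertices lying below some `x(n)`.
In a singly connected `k`-graph, unique factorisation pins down a vertex between two comparable
vertices by its degree; this makes `x.reachSet` maximal and determines `x` up to shift by it.
Conversely, row-finiteness makes a filter countable above any of its vertices, so it has a
cofinal chain; Kőnig's lemma lifts that chain to one of unbounded degree, and the vertices at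
each degree along the lifted chain form a path whose filter contains the given one. -/

lemma vle_refl {Γ : Type} [SmallCategory Γ] (u : Γ) : vle u u := ⟨𝟙 u⟩

lemma vle_trans {Γ : Type} [SmallCategory Γ] {u v w : Γ} : vle u v → vle v w → vle u w :=
  fun ⟨f⟩ ⟨g⟩ => ⟨g ≫ f⟩

instance {Γ : Type} [SmallCategory Γ] : Std.Refl (vle (Γ := Γ)) := ⟨vle_refl⟩

instance {Γ : Type} [SmallCategory Γ] : IsTrans Γ vle := ⟨fun _ _ _ => vle_trans⟩

namespace KGraph

variable {k : ℕ} {Γ : Type} [SmallCategory Γ] (S : KGraph k Γ)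

lemma d_eqToHom {X Y : Γ} (h : X = Y) : S.d (eqToHom h) = 0 := by
  subst h
  exact S.d_id X

lemma exists_factor {X Z : Γ} (f : X ⟶ Z) {n : Fin k → ℕ} (hn : n ≤ S.d f) :
    ∃ (Y : Γ) (g : X ⟶ Y) (h : Y ⟶ Z), S.d g = S.d f - n ∧ S.d h = n ∧ g ≫ h = f := by
  obtain ⟨⟨Y, g, h⟩, ⟨hg, hh, hgh⟩, -⟩ :=
    S.factorisation f (S.d f - n) n (tsub_add_cancel_of_le hn).symm
  exact ⟨Y, g, h, hg, hh, hgh⟩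

lemma eq_of_d_eq (hsc : ∀ X Y : Γ, Subsingleton (X ⟶ Y)) {X Y Y' Z : Γ}
    (g : X ⟶ Y) (h : Y ⟶ Z) (g' : X ⟶ Y') (h' : Y' ⟶ Z) (hd : S.d h = S.d h') : Y = Y' := by
  have hcomp : g' ≫ h' = g ≫ h := (hsc X Z).allEq _ _
  have hdg : S.d g' = S.d g := by
    have hsum := congrArg S.d hcomp
    rw [S.d_comp, S.d_comp, hd] at hsum
    exact add_right_cancel hsum
  obtain ⟨_, -, huniq⟩ := S.factorisation (g ≫ h) (S.d g) (S.d h) (S.d_comp g h)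
  exact congrArg Sigma.fst
    ((huniq ⟨Y, g, h⟩ ⟨rfl, rfl, rfl⟩).trans (huniq ⟨Y', g', h'⟩ ⟨hdg, hd.symm, hcomp⟩).symm)

lemma countable_setOf_vle (hrf : RowFiniteSourceFree S) (v : Γ) : {u | vle v u}.Countable := by
  have hunion : (Set.univ : Set (Σ u : Γ, u ⟶ v)) = ⋃ n, {t | S.d t.2 = n} := by
    ext t
    simp
  have : Countable (Σ u : Γ, u ⟶ v) :=
    Set.countable_univ_iff.mp (hunion ▸ Set.countable_iUnion fun n => (hrf v n).1.countable)
  refine (Set.countable_range (Sigma.fst : (Σ u : Γ, u ⟶ v) → Γ)).mono ?_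
  rintro u ⟨f⟩
  exact ⟨⟨u, f⟩, rfl⟩

end KGraph

namespace InfPath

variable {k : ℕ} {Γ : Type} [SmallCategory Γ] {S : KGraph k Γ}

def reachSet (x : InfPath S) : Set Γ := {v | ∃ n, vle v (x.vertex n)}

lemma vertex_mem_reachSet (x : InfPath S) (n : Fin k → ℕ) : x.vertex n ∈ x.reachSet :=
  ⟨n, vle_refl _⟩

lemma reachSet_isVertexFilter (x : InfPath S) : IsVertexFilter x.reachSet :=
  ⟨⟨_, x.vertex_mem_reachSet 0⟩,
    fun _ ⟨n, hu⟩ _ ⟨m, hv⟩ => ⟨_, x.vertex_mem_reachSet (n ⊔ m),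
      vle_trans hu ⟨x.edge n _ le_sup_left⟩, vle_trans hv ⟨x.edge m _ le_sup_right⟩⟩,
    fun _ ⟨n, hv⟩ _ huv => ⟨n, vle_trans huv hv⟩⟩

lemma reachSet_shift (p : Fin k → ℕ) (x : InfPath S) : (x.shift p).reachSet = x.reachSet := by
  ext v
  constructor
  · rintro ⟨n, hv⟩
    exact ⟨n + p, hv⟩
  · rintro ⟨n, hv⟩
    exact ⟨n, vle_trans hv ⟨x.edge n (n + p) le_self_add⟩⟩

lemma ShiftEquiv.reachSet_eq {x y : InfPath S} (h : ShiftEquiv x y) :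
    x.reachSet = y.reachSet := by
  obtain ⟨p, q, hpq⟩ := h
  rw [← reachSet_shift p x, hpq, reachSet_shift]

lemma ext_of_vertex (hsc : ∀ X Y : Γ, Subsingleton (X ⟶ Y)) {x y : InfPath S}
    (h : x.vertex = y.vertex) : x = y := by
  rcases x with ⟨xv, xe⟩
  rcases y with ⟨yv, ye⟩
  obtain rfl : xv = yv := h
  obtain rfl : xe = ye := funext fun _ => funext fun _ => funext fun _ => (hsc _ _).allEq _ _
  rfl

lemma exists_vertex_eq (hsc : ∀ X Y : Γ, Subsingleton (X ⟶ Y)) (V : (Fin k → ℕ) → Γ)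
    (hV : ∀ m n, m ≤ n → ∃ e : V n ⟶ V m, S.d e = n - m) : ∃ x : InfPath S, x.vertex = V := by
  choose E hE using hV
  exact ⟨⟨V, E, fun _ => (hsc _ _).allEq _ _, fun _ _ _ _ _ => (hsc _ _).allEq _ _, hE⟩, rfl⟩

lemma shiftEquiv_of_reachSet_subset (hsc : ∀ X Y : Γ, Subsingleton (X ⟶ Y)) {x y : InfPath S}
    (hsub : x.reachSet ⊆ y.reachSet) : ShiftEquiv x y := by
  obtain ⟨q, ⟨g⟩⟩ := hsub (x.vertex_mem_reachSet 0)
  refine ⟨S.d g, q, ext_of_vertex hsc (funext fun m => ?_)⟩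
  obtain ⟨N, ⟨h⟩⟩ := hsub (x.vertex_mem_reachSet (m + S.d g))
  have hx : S.d (x.edge 0 (m + S.d g) zero_le) = m + S.d g := by rw [x.deg, tsub_zero]
  have hy : S.d (y.edge q (m + q) le_add_self ≫ g) = m + S.d g := by
    rw [S.d_comp, y.deg, add_tsub_cancel_right]
  -- both vertices split the unique morphism `y (N ⊔ (m + q)) ⟶ x 0` at degree `m + d g`
  exact S.eq_of_d_eq hsc (y.edge N (N ⊔ (m + q)) le_sup_left ≫ h) (x.edge 0 _ zero_le)
    (y.edge (m + q) _ le_sup_right) (y.edge q (m + q) le_add_self ≫ g) (hx.trans hy.symm)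

lemma reachSet_isVertexUltrafilter (hsc : ∀ X Y : Γ, Subsingleton (X ⟶ Y)) (x : InfPath S) :
    IsVertexUltrafilter x.reachSet := by
  refine ⟨x.reachSet_isVertexFilter, fun F hF hsub => subset_antisymm (fun w hw => ?_) hsub⟩
  obtain ⟨z₀, hz₀, ⟨g₀⟩, ⟨f₀⟩⟩ := hF.2.1 w hw _ (hsub (x.vertex_mem_reachSet 0))
  obtain ⟨z, -, ⟨a⟩, ⟨b⟩⟩ := hF.2.1 z₀ hz₀ _ (hsub (x.vertex_mem_reachSet (S.d f₀)))
  have hz₀ : z₀ = x.vertex (S.d f₀) :=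
    S.eq_of_d_eq hsc a f₀ b (x.edge 0 _ zero_le) (by rw [x.deg, tsub_zero])
  exact ⟨S.d f₀, hz₀ ▸ ⟨g₀⟩⟩

end InfPath

section Construction

variable {k : ℕ} {Γ : Type} [SmallCategory Γ] {S : KGraph k Γ}

lemma InfPath.exists_vertex_d_eq_of_directedOn (hsc : ∀ X Y : Γ, Subsingleton (X ⟶ Y))
    {v : Γ} {C : Set Γ} (hC : DirectedOn vle C)
    (hunb : ∀ n, ∃ u ∈ C, ∃ f : u ⟶ v, n ≤ S.d f) :
    ∃ x : InfPath S, ∀ u ∈ C, ∀ (W : Γ) (_ : u ⟶ W) (b : W ⟶ v), x.vertex (S.d b) = W := by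
  have hmid : ∀ n, ∃ W, ∃ u ∈ C, ∃ (_ : u ⟶ W) (b : W ⟶ v), S.d b = n := by
    intro n
    obtain ⟨u, hu, f, hn⟩ := hunb n
    obtain ⟨W, a, b, -, hb, -⟩ := S.exists_factor f hn
    exact ⟨W, u, hu, a, b, hb⟩
  choose V u hu a b hb using hmid
  have hV : ∀ u' ∈ C, ∀ (W : Γ) (_ : u' ⟶ W) (b' : W ⟶ v), V (S.d b') = W := by
    intro u' hu' W a' b'
    obtain ⟨c, -, ⟨g⟩, ⟨g'⟩⟩ := hC _ (hu (S.d b')) u' hu'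
    exact S.eq_of_d_eq hsc (g ≫ a _) (b _) (g' ≫ a') b' (hb _)
  obtain ⟨x, rfl⟩ := InfPath.exists_vertex_eq hsc V fun m n hmn => by
    obtain ⟨P, p, q, hp, hq, -⟩ := S.exists_factor (b n) ((hb n).symm ▸ hmn)
    have hP : V m = P := hq ▸ hV _ (hu n) P (a n ≫ p) q
    exact ⟨p ≫ eqToHom hP.symm, by rw [S.d_comp, S.d_eqToHom, add_zero, hp, hb]⟩
  exact ⟨x, hV⟩

lemma IsVertexFilter.exists_cofinal_chain (hrf : RowFiniteSourceFree S) {F : Set Γ}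
    (hF : IsVertexFilter F) {v : Γ} (hv : v ∈ F) :
    ∃ u : ℕ → Γ, (∀ i, vle v (u i)) ∧ (∀ i j, i ≤ j → vle (u i) (u j)) ∧
      ∀ p ∈ F, ∃ i, vle p (u i) := by
  set A := {u | u ∈ F ∧ vle v u}
  have hAdir : DirectedOn vle A := by
    rintro a ⟨ha, hva⟩ b ⟨hb, -⟩
    obtain ⟨c, hc, hac, hbc⟩ := hF.2.1 a ha b hb
    exact ⟨c, ⟨hc, vle_trans hva hac⟩, hac, hbc⟩
  have : Encodable A := ((S.countable_setOf_vle hrf v).mono fun _ h => h.2).toEncodable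
  have : Inhabited A := ⟨⟨v, hv, vle_refl v⟩⟩
  have hdir : Directed vle (Subtype.val : A → Γ) := directedOn_iff_directed.mp hAdir
  refine ⟨fun i => (hdir.sequence _ i).1, fun i => (hdir.sequence _ i).2.2,
    fun i j hij => Nat.rel_of_forall_rel_succ_of_le vle hdir.sequence_mono_nat hij, fun p hp => ?_⟩
  obtain ⟨c, hc, hpc, hvc⟩ := hF.2.1 p hp v hv
  exact ⟨_, vle_trans hpc (hdir.rel_sequence ⟨c, hc, hvc⟩)⟩

/-- Kőnig's lemma, applied to the finite sets of vertices at degree `(i, …, i)` above `u i`. -/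
lemma exists_chain_above_of_chain (hsc : ∀ X Y : Γ, Subsingleton (X ⟶ Y))
    (hrf : RowFiniteSourceFree S) {u : ℕ → Γ} (hu : ∀ i j, i ≤ j → vle (u i) (u j)) :
    ∃ w : ℕ → Γ, (∀ i j, i ≤ j → vle (w i) (w j)) ∧
      ∀ i, ∃ f : w i ⟶ u i, S.d f = fun _ => i := by
  let α : ℕ → Type := fun i => {W : Γ // ∃ f : W ⟶ u i, S.d f = fun _ => i}
  have hfin : ∀ i, Finite (α i) := by
    intro i
    have := (hrf (u i) fun _ => i).1.to_subtype
    exact Finite.of_surjective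
      (fun t : {t : Σ W : Γ, W ⟶ u i | S.d t.2 = fun _ => i} => (⟨t.1.1, t.1.2, t.2⟩ : α i))
      fun ⟨W, f, hf⟩ => ⟨⟨⟨W, f⟩, hf⟩, rfl⟩
  have hne : ∀ i, Nonempty (α i) := fun i =>
    have ⟨⟨W, f⟩, hf⟩ := (hrf (u i) fun _ => i).2
    ⟨⟨W, f, hf⟩⟩
  have hproj : ∀ i j, i ≤ j → ∀ b : α j, ∃ a : α i, vle a.1 b.1 := by
    rintro i j hij ⟨W, f, hf⟩
    obtain ⟨g⟩ := hu i j hij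
    have hle : (fun _ => i) ≤ S.d (f ≫ g) := by
      rw [S.d_comp, hf]
      exact fun _ => le_add_right hij
    obtain ⟨P, p, q, -, hq, -⟩ := S.exists_factor (f ≫ g) hle
    exact ⟨⟨P, q, hq⟩, ⟨p⟩⟩
  have huniq : ∀ i (a a' : α i) (W : Γ), vle a.1 W → vle a'.1 W → a = a' := by
    rintro i ⟨P, q, hq⟩ ⟨P', q', hq'⟩ W ⟨p⟩ ⟨p'⟩
    exact Subtype.ext (S.eq_of_d_eq hsc p q p' q' (hq.trans hq'.symm))
  choose π hπ using hproj
  obtain ⟨s, hs⟩ := exists_seq_forall_proj_of_forall_finite (α := α) (fun hij => π _ _ hij)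
    (fun i a => huniq i _ _ _ (hπ i i _ a) (vle_refl _))
    (fun i j l hij hjl a => huniq i _ _ _
      (vle_trans (hπ i j hij _) (hπ j l hjl a)) (hπ i l _ a))
    (fun _ _ => Set.toFinite _)
  exact ⟨fun i => (s i).1, fun i j hij => (hs hij ▸ hπ i j hij (s j) :), fun i => (s i).2⟩

lemma IsVertexFilter.exists_subset_reachSet (hsc : ∀ X Y : Γ, Subsingleton (X ⟶ Y))
    (hrf : RowFiniteSourceFree S) {F : Set Γ} (hF : IsVertexFilter F) {v : Γ} (hv : v ∈ F) :
    ∃ x : InfPath S, x.vertex 0 = v ∧ F ⊆ x.reachSet := by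
  obtain ⟨u, huv, hu, hcof⟩ := hF.exists_cofinal_chain hrf hv
  obtain ⟨w, hw, hwu⟩ := exists_chain_above_of_chain hsc hrf hu
  choose f hf using hwu
  let g : ∀ i, w i ⟶ v := fun i => f i ≫ (huv i).some
  have hdir : DirectedOn vle (Set.range w) := directedOn_range.mpr fun i j =>
    ⟨max i j, hw _ _ (le_max_left _ _), hw _ _ (le_max_right _ _)⟩
  have hunb : ∀ n, ∃ u ∈ Set.range w, ∃ f : u ⟶ v, n ≤ S.d f := by
    intro n
    refine ⟨_, Set.mem_range_self (Finset.univ.sup n), g _, ?_⟩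
    rw [S.d_comp, hf]
    exact fun i => (Finset.le_sup (Finset.mem_univ i)).trans le_self_add
  obtain ⟨x, hx⟩ := InfPath.exists_vertex_d_eq_of_directedOn hsc hdir hunb
  refine ⟨x, ?_, fun p hp => ?_⟩
  · simpa only [S.d_id] using hx _ (Set.mem_range_self 0) v (g 0) (𝟙 v)
  · obtain ⟨i, hpi⟩ := hcof p hp
    have hwi := hx _ (Set.mem_range_self i) (w i) (𝟙 _) (g i)
    exact ⟨_, vle_trans hpi (hwi ▸ (⟨f i⟩ : vle (u i) (w i)))⟩

lemma InfPath.setOf_shiftEquiv_vertex_zero_eq_reachSet (hsc : ∀ X Y : Γ, Subsingleton (X ⟶ Y))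
    (hrf : RowFiniteSourceFree S) (x : InfPath S) :
    {v | ∃ y : InfPath S, ShiftEquiv y x ∧ y.vertex 0 = v} = x.reachSet := by
  ext v
  constructor
  · rintro ⟨y, hyx, rfl⟩
    exact hyx.reachSet_eq ▸ y.vertex_mem_reachSet 0
  · intro hv
    obtain ⟨y, rfl, hsub⟩ := x.reachSet_isVertexFilter.exists_subset_reachSet hsc hrf hv
    obtain ⟨p, q, h⟩ := shiftEquiv_of_reachSet_subset hsc hsub
    exact ⟨y, ⟨q, p, h.symm⟩, rfl⟩

end Construction

/-- in a singly connected row-finite source-free `k`-graph, the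
ultrafilters for `(Γ⁰, ≤)` are exactly the vertex sets of shift-equivalence classes of
infinite paths. -/
theorem ultrafilter_iff_orbit_vertex_set (k : ℕ) (Γ : Type) [SmallCategory Γ]
    (S : KGraph k Γ) (hsc : ∀ X Y : Γ, Subsingleton (X ⟶ Y))
    (hrf : RowFiniteSourceFree S) (F : Set Γ) :
    IsVertexUltrafilter F ↔
      ∃ x : InfPath S, F = {v | ∃ y : InfPath S, ShiftEquiv y x ∧ y.vertex 0 = v} := by
  constructor
  · rintro ⟨hF, hFmax⟩
    obtain ⟨v, hv⟩ := hF.1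
    obtain ⟨x, -, hsub⟩ := hF.exists_subset_reachSet hsc hrf hv
    rw [← hFmax _ x.reachSet_isVertexFilter hsub]
    exact ⟨x, (setOf_shiftEquiv_vertex_zero_eq_reachSet hsc hrf x).symm⟩
  · rintro ⟨x, rfl⟩
    rw [setOf_shiftEquiv_vertex_zero_eq_reachSet hsc hrf x]
    exact reachSet_isVertexUltrafilter hsc x
end
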